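/- With the notation above, ev(Cτ) = 1 − v^{-2}, and for every integer n ≥ 2 the monomial v^{2n}z^0 occurs in ev((Cτ)^n) with coefficient 1 while every other monomial occurring in ev((Cτ)^n) has v-exponent strictly less than 2n. -/

import Mathlib

/- R = ℤ[v^{±1}, z^{±1}] modelled as the group algebra of ℤ × ℤ over ℤ:
   the coefficient of v^i z^j in P is `P (i, j)`. -/
noncomputable section

abbrev R2 : Type := AddMonoidAlgebra ℤ (ℤ × ℤ)

/-- `v` -/
def V : R2 := AddMonoidAlgebra.single (1, 0) 1
/-- `v⁻¹` -/
def Vi : R2 := AddMonoidAlgebra.single (-1, 0) 1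
/-- `z` -/
def Z : R2 := AddMonoidAlgebra.single (0, 1) 1
/-- `z⁻¹` -/
def Zi : R2 := AddMonoidAlgebra.single (0, -1) 1
/-- `δ = (v⁻¹ - v) z⁻¹` -/
def δR : R2 := (Vi - V) * Zi

variable {A : Type*} [Ring A] [Algebra R2 A]

/-- `c = v⁻¹ σ` -/
def cOf (σ : Aˣ) : A := Vi • (σ : A)
/-- `c⁻¹ = v σ⁻¹` -/
def cInvOf (σ : Aˣ) : A := V • ((σ⁻¹ : Aˣ) : A)
/-- `C = c₁ c₃` -/
def COf (σ₁ σ₃ : Aˣ) : A := cOf σ₁ * cOf σ₃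
/-- `τ = (-zv) h` -/
def τOf (h : A) : A := (-(Z * V)) • h

/-! Write `x = Cτ = -(z v⁻¹) σ₁σ₃h` and `u = σ₁σ₃H`. The relations give `x² = -z² x + z² u`
and `u x = β u` with `β = v² - 1 - z²`; since `v z δ = 1 - v²`, this yields
`ev(x^(n+2)) = (v² - 1) β^(n+1) - z² ev(x^(n+1))`. The first summand is `v^(2n+4)` plus terms of
lower `v`-degree, while by induction the second has `v`-degree at most `2n+2`. -/

open AddMonoidAlgebra

section VDegree

variable {k M : Type*} [Ring k]

def vDeg (a : ℤ × M) : WithBot ℤ := a.1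

def VDegLE (p : AddMonoidAlgebra k (ℤ × M)) (m : ℤ) : Prop := p.supDegree vDeg ≤ m

variable {p q : AddMonoidAlgebra k (ℤ × M)} {m n : ℤ}

theorem VDegLE.mono (hp : VDegLE p m) (hmn : m ≤ n) : VDegLE p n :=
  hp.trans (WithBot.coe_le_coe.2 hmn)

theorem vDegLE_single (a : ℤ × M) (r : k) : VDegLE (single a r) a.1 := by
  classical
  rw [VDegLE, supDegree_single]
  split_ifs
  · exact bot_le
  · exact le_rfl

theorem VDegLE.neg (hp : VDegLE p m) : VDegLE (-p) m := by
  rwa [VDegLE, supDegree_neg]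

theorem VDegLE.add (hp : VDegLE p m) (hq : VDegLE q m) : VDegLE (p + q) m :=
  supDegree_add_le.trans (sup_le hp hq)

theorem VDegLE.sub (hp : VDegLE p m) (hq : VDegLE q m) : VDegLE (p - q) m :=
  supDegree_sub_le.trans (sup_le hp hq)

theorem VDegLE.fst_le_of_coeff_ne_zero (hp : VDegLE p m) {a : ℤ × M} (ha : p.coeff a ≠ 0) :
    a.1 ≤ m :=
  WithBot.coe_le_coe.1 ((Finset.le_sup (f := vDeg) (Finsupp.mem_support_iff.2 ha)).trans hp)

variable [AddMonoid M]

theorem vDegLE_one : VDegLE (1 : AddMonoidAlgebra k (ℤ × M)) 0 :=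
  vDegLE_single 0 1

theorem VDegLE.mul (hp : VDegLE p m) (hq : VDegLE q n) : VDegLE (p * q) (m + n) := by
  refine (supDegree_mul_le (fun a b => ?_)).trans ?_
  · simp only [vDeg, Prod.fst_add, WithBot.coe_add]
  · rw [WithBot.coe_add]
    exact add_le_add hp hq

/-- `p` is `v ^ m` plus terms of lower `v`-degree. -/
def HasVLeading (p : AddMonoidAlgebra k (ℤ × M)) (m : ℤ) : Prop :=
  VDegLE (p - single (m, 0) 1) (m - 1)

theorem HasVLeading.vDegLE (hp : HasVLeading p m) : VDegLE p m := by
  simpa using (VDegLE.mono hp (by omega)).add (vDegLE_single (m, 0) 1)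

theorem HasVLeading.add_vDegLE (hp : HasVLeading p m) (hq : VDegLE q (m - 1)) :
    HasVLeading (p + q) m := by
  rw [HasVLeading, add_sub_right_comm]
  exact VDegLE.add hp hq

theorem HasVLeading.sub_vDegLE (hp : HasVLeading p m) (hq : VDegLE q (m - 1)) :
    HasVLeading (p - q) m := by
  simpa only [sub_eq_add_neg] using hp.add_vDegLE hq.neg

theorem HasVLeading.mul (hp : HasVLeading p m) (hq : HasVLeading q n) :
    HasVLeading (p * q) (m + n) := by
  have key : p * q - single (m, 0) 1 * single (n, 0) 1 =
      (p - single (m, 0) 1) * q + single (m, 0) 1 * (q - single (n, 0) 1) := by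
    noncomm_ring
  rw [single_mul_single, Prod.mk_add_mk, add_zero, one_mul] at key
  rw [HasVLeading, key]
  exact ((VDegLE.mul hp hq.vDegLE).mono (by omega)).add
    (((vDegLE_single _ _).mul hq).mono (by omega))

theorem hasVLeading_single (m : ℤ) :
    HasVLeading (single (m, 0) 1 : AddMonoidAlgebra k (ℤ × M)) m := by
  rw [HasVLeading, sub_self]
  exact bot_le

theorem HasVLeading.pow (hp : HasVLeading p m) (n : ℕ) : HasVLeading (p ^ n) (n * m) := by
  induction n with
  | zero =>
    rw [pow_zero, Nat.cast_zero, zero_mul, one_def]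
    exact hasVLeading_single 0
  | succ n ih => simpa [pow_succ, add_mul] using ih.mul hp

theorem HasVLeading.coeff_self [Nontrivial k] (hp : HasVLeading p m) : p.coeff (m, 0) = 1 := by
  have h : (p - single (m, 0) 1).coeff (m, 0) = 0 := by
    by_contra h
    have := VDegLE.fst_le_of_coeff_ne_zero hp h
    omega
  simpa [sub_eq_zero] using h

theorem HasVLeading.fst_lt_of_coeff_ne_zero (hp : HasVLeading p m) {a : ℤ × M}
    (ha : p.coeff a ≠ 0) (ham : a ≠ (m, 0)) : a.1 < m := by
  have h : (p - single (m, 0) 1).coeff a ≠ 0 := by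
    simpa [Finsupp.single_apply, Ne.symm ham] using ha
  have := VDegLE.fst_le_of_coeff_ne_zero hp h
  omega

end VDegree

section Recurrence

variable {k M : Type*} [Ring k] [AddMonoid M]

theorem hasVLeading_of_recurrence {a c β : AddMonoidAlgebra k (ℤ × M)}
    {P : ℕ → AddMonoidAlgebra k (ℤ × M)} {d : ℤ} (hd : 0 < d) (ha : VDegLE a 0)
    (hc : HasVLeading c d) (hβ : HasVLeading β d) (hP₀ : VDegLE (P 0) d)
    (hP : ∀ n, P (n + 1) = c * β ^ (n + 1) + a * P n) (n : ℕ) :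
    HasVLeading (P (n + 1)) ((n + 2) * d) := by
  have step : ∀ n : ℕ, VDegLE (P n) ((n + 1) * d) → HasVLeading (P (n + 1)) ((n + 2) * d) := by
    intro n hn
    have hlead : HasVLeading (c * β ^ (n + 1)) ((n + 2) * d) := by
      convert hc.mul (hβ.pow (n + 1)) using 1
      push_cast
      ring
    rw [hP n]
    exact hlead.add_vDegLE ((ha.mul hn).mono (by nlinarith))
  have bound : ∀ n : ℕ, VDegLE (P n) ((n + 1) * d) := by
    intro n
    induction n with
    | zero => simpa using hP₀
    | succ n ih => simpa [add_assoc, one_add_one_eq_two] using (step n ih).vDegLE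
  exact step n (bound n)

end Recurrence

theorem pow_add_two_eq_of_mul_self_eq {S B : Type*} [CommSemiring S] [Semiring B] [Algebra S B]
    {x u : B} {a b β : S} (hx : x * x = a • x + b • u) (hu : u * x = β • u) (n : ℕ) :
    x ^ (n + 2) = a • x ^ (n + 1) + (b * β ^ n) • u := by
  induction n with
  | zero => simpa [sq] using hx
  | succ n ih =>
    calc x ^ (n + 1 + 2) = x ^ (n + 2) * x := pow_succ x (n + 2)
      _ = (a • x ^ (n + 1) + (b * β ^ n) • u) * x := by rw [ih]
      _ = a • x ^ (n + 2) + (b * β ^ (n + 1)) • u := by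
        rw [add_mul, smul_mul_assoc, smul_mul_assoc, ← pow_succ, hu, smul_smul, mul_assoc,
          ← pow_succ]

theorem Vi_mul_V : Vi * V = 1 := by
  rw [Vi, V, AddMonoidAlgebra.single_mul_single, one_mul]
  rfl

theorem Z_mul_Zi : Z * Zi = 1 := by
  rw [Z, Zi, AddMonoidAlgebra.single_mul_single, one_mul]
  rfl

theorem V_mul_Z_mul_δR : V * Z * δR = 1 - V * V := by
  rw [δR]
  linear_combination (V * Vi - V * V) * Z_mul_Zi + Vi_mul_V

theorem vDegLE_neg_Z_sq : VDegLE (-(Z * Z)) 0 :=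
  (VDegLE.mul (vDegLE_single (0, 1) 1) (vDegLE_single (0, 1) 1)).neg

theorem vDegLE_one_sub_Vi_sq : VDegLE (1 - Vi ^ 2) 2 := by
  have hVi : VDegLE Vi (-1) := vDegLE_single (-1, 0) 1
  exact (vDegLE_one.mono zero_le_two).sub ((sq Vi ▸ hVi.mul hVi).mono (by norm_num))

theorem hasVLeading_V_sq_sub_one : HasVLeading (V * V - 1) 2 :=
  (hasVLeading_single 1 |>.mul (hasVLeading_single 1)).sub_vDegLE (vDegLE_one.mono zero_le_one)

theorem hasVLeading_V_sq_sub_one_sub_Z_sq : HasVLeading (V * V - 1 - Z * Z) 2 :=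
  hasVLeading_V_sq_sub_one.sub_vDegLE (by simpa using vDegLE_neg_Z_sq.neg.mono zero_le_one)

section MixedHecke

variable {σ₁ σ₃ : Aˣ} {h H : A}

theorem units_val_eq_of_skein {σ : Aˣ} (hσ : Vi • (σ : A) - V • ((σ⁻¹ : Aˣ) : A) = Z • (1 : A)) :
    (σ : A) = (V * Z) • (1 : A) + (V * V) • ((σ⁻¹ : Aˣ) : A) := by
  have := congrArg (V • ·) hσ
  simp only [smul_sub, smul_smul, mul_comm V Vi, Vi_mul_V, one_smul] at this
  rw [← this, sub_add_cancel]

theorem units_val_mul_self_of_skein {σ : Aˣ}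
    (hσ : Vi • (σ : A) - V • ((σ⁻¹ : Aˣ) : A) = Z • (1 : A)) :
    (σ : A) * σ = (V * Z) • (σ : A) + (V * V) • (1 : A) := by
  nth_rewrite 1 [units_val_eq_of_skein hσ]
  rw [add_mul, smul_mul_assoc, smul_mul_assoc, one_mul, Units.inv_mul]

theorem COf_mul_τOf (σ₁ σ₃ : Aˣ) (h : A) :
    COf σ₁ σ₃ * τOf h = (-(Z * Vi)) • ((σ₁ : A) * σ₃ * h) := by
  simp only [COf, cOf, τOf, smul_mul_assoc, mul_smul_comm, smul_smul]
  congr 1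
  linear_combination (-(Z * Vi)) * Vi_mul_V

theorem h_mul_σ₁_mul_σ₃_mul_h (hskein3 : Vi • (σ₃ : A) - V • ((σ₃⁻¹ : Aˣ) : A) = Z • (1 : A))
    (hHdef : H = h * (σ₁ : A) * ((σ₃⁻¹ : Aˣ) : A) * h) (hh : h * (σ₁ : A) * h = h) :
    h * σ₁ * σ₃ * h = (V * Z) • h + (V * V) • H := by
  nth_rewrite 1 [units_val_eq_of_skein hskein3]
  rw [mul_add, add_mul, mul_smul_comm, mul_smul_comm, smul_mul_assoc, smul_mul_assoc, mul_one, hh,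
    ← hHdef]

theorem H_mul_σ₁_mul_σ₃ (hskein3 : Vi • (σ₃ : A) - V • ((σ₃⁻¹ : Aˣ) : A) = Z • (1 : A))
    (hH2 : H * (σ₁ : A) = H * (σ₃ : A)) :
    H * (σ₁ * σ₃) = (V * Z) • (H * σ₁) + (V * V) • H := by
  rw [← mul_assoc, hH2, mul_assoc, units_val_mul_self_of_skein hskein3, mul_add, mul_smul_comm,
    mul_smul_comm, mul_one]

theorem H_mul_h (hHdef : H = h * (σ₁ : A) * ((σ₃⁻¹ : Aˣ) : A) * h) (hh2 : h * h = δR • h) :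
    H * h = δR • H := by
  rw [hHdef, mul_assoc, hh2, mul_smul_comm]

theorem COf_mul_τOf_mul_self
    (hskein3 : Vi • (σ₃ : A) - V • ((σ₃⁻¹ : Aˣ) : A) = Z • (1 : A))
    (hHdef : H = h * (σ₁ : A) * ((σ₃⁻¹ : Aˣ) : A) * h) (hh : h * (σ₁ : A) * h = h) :
    COf σ₁ σ₃ * τOf h * (COf σ₁ σ₃ * τOf h) =
      (-(Z * Z)) • (COf σ₁ σ₃ * τOf h) + (Z * Z) • ((σ₁ : A) * σ₃ * H) := by
  have hw : (σ₁ : A) * σ₃ * h * (σ₁ * σ₃ * h) = (σ₁ : A) * σ₃ * (h * σ₁ * σ₃ * h) := by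
    simp only [mul_assoc]
  rw [COf_mul_τOf, smul_mul_smul_comm, hw, h_mul_σ₁_mul_σ₃_mul_h hskein3 hHdef hh, mul_add,
    mul_smul_comm, mul_smul_comm, smul_add, smul_smul, smul_smul, smul_smul]
  congr 2
  · linear_combination (Z ^ 3 * Vi) * Vi_mul_V
  · linear_combination (Z * Z * (Vi * V + 1)) * Vi_mul_V

theorem σ₁_mul_σ₃_mul_H_mul_COf_mul_τOf
    (hskein3 : Vi • (σ₃ : A) - V • ((σ₃⁻¹ : Aˣ) : A) = Z • (1 : A))
    (hH2 : H * (σ₁ : A) = H * (σ₃ : A)) (hHdef : H = h * (σ₁ : A) * ((σ₃⁻¹ : Aˣ) : A) * h)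
    (hh2 : h * h = δR • h) (hh : h * (σ₁ : A) * h = h) :
    (σ₁ : A) * σ₃ * H * (COf σ₁ σ₃ * τOf h) = (V * V - 1 - Z * Z) • ((σ₁ : A) * σ₃ * H) := by
  have hHσ₁h : H * σ₁ * h = H := by
    rw [hHdef]
    simp only [mul_assoc] at hh ⊢
    rw [hh]
  have hHw : H * ((σ₁ : A) * σ₃ * h) = ((V * Z) + (V * V) * δR) • H := by
    rw [← mul_assoc, ← mul_assoc, mul_assoc H, H_mul_σ₁_mul_σ₃ hskein3 hH2, add_mul,
      smul_mul_assoc, smul_mul_assoc, hHσ₁h, H_mul_h hHdef hh2, smul_smul, add_smul]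
  rw [COf_mul_τOf, mul_smul_comm, mul_assoc _ H, hHw, mul_smul_comm, smul_smul]
  congr 1
  linear_combination (-(Vi * V)) * V_mul_Z_mul_δR + (V * V - 1 - Z * Z) * Vi_mul_V

theorem ev_σ₁_mul_σ₃_mul_H (hskein3 : Vi • (σ₃ : A) - V • ((σ₃⁻¹ : Aˣ) : A) = Z • (1 : A))
    (hH2 : H * (σ₁ : A) = H * (σ₃ : A)) (ev : A →ₗ[R2] R2)
    (htrace : ∀ x y : A, ev (x * y) = ev (y * x)) (hevH : ev H = δR ^ 2)
    (hevσ₁H : ev ((σ₁ : A) * H) = δR) :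
    ev ((σ₁ : A) * σ₃ * H) = V * Z * δR + V * V * δR ^ 2 := by
  rw [htrace, H_mul_σ₁_mul_σ₃ hskein3 hH2, map_add, map_smul, map_smul, smul_eq_mul, smul_eq_mul,
    htrace H, hevσ₁H, hevH]

end MixedHecke

theorem statement9_general (A : Type*) [Ring A] [Algebra R2 A]
    (σ₁ σ₃ : Aˣ) (h H : A)
    (hskein3 : Vi • (σ₃ : A) - V • ((σ₃⁻¹ : Aˣ) : A) = Z • (1 : A))
    (hH2 : H * (σ₁ : A) = H * (σ₃ : A))
    (hHdef : H = h * (σ₁ : A) * ((σ₃⁻¹ : Aˣ) : A) * h)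
    (hh2 : h * h = δR • h)
    (hh : h * (σ₁ : A) * h = h)
    (ev : A →ₗ[R2] R2)
    (htrace : ∀ x y : A, ev (x * y) = ev (y * x))
    (hevH : ev H = δR ^ 2)
    (hevσ₁σ₃h : ev ((σ₁ : A) * σ₃ * h) = δR)
    (hevσ₁H : ev ((σ₁ : A) * H) = δR)
    :
    ev (COf σ₁ σ₃ * τOf h) = 1 - Vi ^ 2 ∧
    ∀ n : ℕ, 2 ≤ n →
      (ev ((COf σ₁ σ₃ * τOf h) ^ n)).coeff ((2 * n : ℤ), 0) = 1 ∧
      ∀ i j : ℤ, (ev ((COf σ₁ σ₃ * τOf h) ^ n)).coeff (i, j) ≠ 0 →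
        (i, j) ≠ ((2 * n : ℤ), 0) → i < 2 * n := by
  set x := COf σ₁ σ₃ * τOf h with hx
  have hev : ev x = 1 - Vi ^ 2 := by
    rw [hx, COf_mul_τOf, map_smul, hevσ₁σ₃h, smul_eq_mul]
    linear_combination (-Vi ^ 2) * V_mul_Z_mul_δR + (Z * Vi * δR + Vi * V + 1) * Vi_mul_V
  have hrec (n : ℕ) : ev (x ^ (n + 1 + 1)) =
      (V * V - 1) * (V * V - 1 - Z * Z) ^ (n + 1) + -(Z * Z) * ev (x ^ (n + 1)) := by
    rw [pow_add_two_eq_of_mul_self_eq (COf_mul_τOf_mul_self hskein3 hHdef hh)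
      (σ₁_mul_σ₃_mul_H_mul_COf_mul_τOf hskein3 hH2 hHdef hh2 hh), map_add, map_smul, map_smul,
      smul_eq_mul, smul_eq_mul, ev_σ₁_mul_σ₃_mul_H hskein3 hH2 ev htrace hevH hevσ₁H]
    linear_combination
      (V * V - 1 - Z * Z) ^ n * (Z * Z + V * Z * δR + 1 - V * V) * V_mul_Z_mul_δR
  have hlead := hasVLeading_of_recurrence (P := fun n => ev (x ^ (n + 1))) two_pos
    vDegLE_neg_Z_sq hasVLeading_V_sq_sub_one hasVLeading_V_sq_sub_one_sub_Z_sq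
    (by simpa [hev] using vDegLE_one_sub_Vi_sq) hrec
  refine ⟨hev, fun n hn => ?_⟩
  obtain ⟨m, rfl⟩ := Nat.exists_eq_add_of_le' hn
  have hm : HasVLeading (ev (x ^ (m + 2))) (2 * (m + 2 : ℕ)) := by
    convert hlead m using 1
    push_cast
    ring
  exact ⟨hm.coeff_self, fun i j hij hne => hm.fst_lt_of_coeff_ne_zero hij hne⟩

theorem statement9 (A : Type*) [Ring A] [Algebra R2 A]
    (σ₁ σ₃ : Aˣ) (h H : A)
    (hcomm : (σ₁ : A) * σ₃ = (σ₃ : A) * σ₁)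
    (hskein1 : Vi • (σ₁ : A) - V • ((σ₁⁻¹ : Aˣ) : A) = Z • (1 : A))
    (hskein3 : Vi • (σ₃ : A) - V • ((σ₃⁻¹ : Aˣ) : A) = Z • (1 : A))
    (hH1 : (σ₁ : A) * H = (σ₃ : A) * H)
    (hH2 : H * (σ₁ : A) = H * (σ₃ : A))
    (hHdef : H = h * (σ₁ : A) * ((σ₃⁻¹ : Aˣ) : A) * h)
    (hh2 : h * h = δR • h)
    (hh : h * (σ₁ : A) * h = h)
    (ev : A →ₗ[R2] R2)
    (htrace : ∀ x y : A, ev (x * y) = ev (y * x))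
    (hev1 : ev 1 = δR ^ 4)
    (hevσ₁ : ev (σ₁ : A) = δR ^ 3)
    (hevσ₃ : ev (σ₃ : A) = δR ^ 3)
    (hevh : ev h = δR ^ 3)
    (hevσ₁σ₃ : ev ((σ₁ : A) * σ₃) = δR ^ 2)
    (hevσ₁h : ev ((σ₁ : A) * h) = δR ^ 2)
    (hevσ₃h : ev ((σ₃ : A) * h) = δR ^ 2)
    (hevH : ev H = δR ^ 2)
    (hevσ₁σ₃h : ev ((σ₁ : A) * σ₃ * h) = δR)
    (hevσ₁H : ev ((σ₁ : A) * H) = δR)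
    :
    ev (COf σ₁ σ₃ * τOf h) = 1 - Vi ^ 2 ∧
    ∀ n : ℕ, 2 ≤ n →
      (ev ((COf σ₁ σ₃ * τOf h) ^ n)).coeff ((2 * n : ℤ), 0) = 1 ∧
      ∀ i j : ℤ, (ev ((COf σ₁ σ₃ * τOf h) ^ n)).coeff (i, j) ≠ 0 →
        (i, j) ≠ ((2 * n : ℤ), 0) → i < 2 * n :=
  statement9_general A σ₁ σ₃ h H hskein3 hH2 hHdef hh2 hh ev htrace hevH hevσ₁σ₃h hevσ₁H
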